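/- arXiv:1705.07011 — 5 statements merged into one kernel-verified Lean document; each statement's English description precedes it below -/
import Mathlib

section
/- Let 𝒳 be a finite alphabet with |𝒳| = M ≥ 2, let P(x̂|x) be the transition probabilities of a discrete memoryless channel with input and output alphabet 𝒳, assume uniform input, and let δ = (1/M)·Σ_{x∈𝒳} Σ_{x̂≠x} P(x̂|x) be the symbol error probability, with 0 < δ < (M−1)/M. For the symbol-wise Hamming mismatched decoding metric with parameter ε = δ, the generalized mutual information satisfies sup_{s>0} I(s) = log₂ M − h_b(δ) − δ·log₂(M−1), and the supremum is attained at s = 1. -/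
/-!
For the Hamming metric with `ε = δ`, write `a = 1 - δ` and `b = δ / (M - 1)`. Since `Σ_{x'} q(x̂,x')^s`
does not depend on `x̂`, the GMI has the closed form
`I(s) = log₂ M + s·L - log₂ (a^s + (M-1)·b^s)` with `L = (1-δ)·log₂ a + δ·log₂ b = -h_b(δ) - δ·log₂(M-1)`.
At `s = 1` the partition sum is `a + (M-1)·b = 1`, and `I(s) ≤ I(1)` is the concavity of `log₂`
applied with weights `(1-δ, δ)` to the points `a^(s-1)` and `b^(s-1)`.
-/

open Finset

/-- Binary entropy function (base-2 logarithm); `Real.logb 2 0 = 0` gives the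
convention `hb 0 = hb 1 = 0`. -/
noncomputable def binEnt (p : ℝ) : ℝ :=
  -p * Real.logb 2 p - (1 - p) * Real.logb 2 (1 - p)

open Real

theorem mul_logb_add_mul_logb_le_logb {β w₁ w₂ u v : ℝ} (hβ : 1 < β) (hw₁ : 0 ≤ w₁)
    (hw₂ : 0 ≤ w₂) (hw : w₁ + w₂ = 1) (hu : 0 < u) (hv : 0 < v) :
    w₁ * logb β u + w₂ * logb β v ≤ logb β (w₁ * u + w₂ * v) := by
  have hlog := strictConcaveOn_log_Ioi.concaveOn.2 (Set.mem_Ioi.2 hu) (Set.mem_Ioi.2 hv)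
    hw₁ hw₂ hw
  simp only [smul_eq_mul] at hlog
  calc w₁ * logb β u + w₂ * logb β v = (w₁ * log u + w₂ * log v) / log β := by
        simp only [logb]; ring
    _ ≤ log (w₁ * u + w₂ * v) / log β := by gcongr; exact (log_pos hβ).le

theorem sub_one_mul_crossEntropy_le_logb {β δ c : ℝ} (hβ : 1 < β) (hδ0 : 0 < δ) (hδ1 : δ < 1)
    (hc : 0 < c) (s : ℝ) :
    (s - 1) * ((1 - δ) * logb β (1 - δ) + δ * logb β (δ / c)) ≤
      logb β ((1 - δ) ^ s + c * (δ / c) ^ s) := by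
  have ha : 0 < 1 - δ := by linarith
  have hb : 0 < δ / c := div_pos hδ0 hc
  have hjensen := mul_logb_add_mul_logb_le_logb hβ ha.le hδ0.le (by ring)
    (rpow_pos_of_pos ha (s - 1)) (rpow_pos_of_pos hb (s - 1))
  rw [logb_rpow_eq_mul_logb_of_pos ha, logb_rpow_eq_mul_logb_of_pos hb,
    rpow_sub_one ha.ne', rpow_sub_one hb.ne'] at hjensen
  convert hjensen using 2
  · ring
  · field_simp

section Hamming

variable {𝒳 : Type*} [Fintype 𝒳] [DecidableEq 𝒳]

theorem add_sum_filter_ne (f : 𝒳 → ℝ) (x : 𝒳) :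
    f x + ∑ y ∈ univ.filter (· ≠ x), f y = ∑ y, f y := by
  rw [filter_ne', add_sum_erase _ _ (mem_univ x)]

theorem sum_diag_add_sum_offDiag (P : 𝒳 → 𝒳 → ℝ) (hPsum : ∀ x, ∑ y, P y x = 1) :
    ∑ x, P x x + ∑ x, ∑ y ∈ univ.filter (· ≠ x), P y x = Fintype.card 𝒳 := by
  rw [← sum_add_distrib, sum_congr rfl fun x _ => (add_sum_filter_ne (P · x) x).trans (hPsum x),
    sum_const, card_univ, nsmul_one]

theorem sum_ite_eq_add_card_sub_one_mul (y : 𝒳) (A B : ℝ) :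
    ∑ x, (if y = x then A else B) = A + ((Fintype.card 𝒳 : ℝ) - 1) * B := by
  have : Nonempty 𝒳 := ⟨y⟩
  rw [← add_sum_erase _ _ (mem_univ y), if_pos rfl,
    sum_congr rfl fun x hx => if_neg (ne_of_mem_erase hx).symm, sum_const,
    card_erase_of_mem (mem_univ y), card_univ, nsmul_eq_mul,
    Nat.cast_sub Fintype.card_pos, Nat.cast_one]

theorem sum_mul_ite_eq (f : 𝒳 → ℝ) (x : 𝒳) (A B : ℝ) :
    ∑ y, f y * (if y = x then A else B) = f x * A + (∑ y ∈ univ.filter (· ≠ x), f y) * B := by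
  rw [← add_sum_filter_ne, if_pos rfl, sum_mul]
  congr 1
  exact sum_congr rfl fun y hy => by rw [if_neg (mem_filter.1 hy).2]

theorem sum_mul_logb_hamming_rpow (β : ℝ) (P : 𝒳 → 𝒳 → ℝ) (hPsum : ∀ x, ∑ y, P y x = 1)
    {a b c : ℝ} (ha : 0 < a) (hb : 0 < b) (hc : 0 < c) (s : ℝ) :
    ∑ x, ∑ y, P y x *
        logb β (c * (if y = x then a else b) ^ s / ∑ x', (if y = x' then a else b) ^ s) =
      Fintype.card 𝒳 * (logb β c - logb β (a ^ s + ((Fintype.card 𝒳 : ℝ) - 1) * b ^ s)) +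
        s * ((∑ x, P x x) * logb β a +
          (∑ x, ∑ y ∈ univ.filter (· ≠ x), P y x) * logb β b) := by
  set Z := a ^ s + ((Fintype.card 𝒳 : ℝ) - 1) * b ^ s
  have hZ : ∀ y : 𝒳, ∑ x', (if y = x' then a else b) ^ s = Z := fun y => by
    simp only [apply_ite (· ^ s)]
    exact sum_ite_eq_add_card_sub_one_mul y _ _
  have hterm : ∀ x y, P y x *
      logb β (c * (if y = x then a else b) ^ s / ∑ x', (if y = x' then a else b) ^ s) =
        P y x * (logb β c - logb β Z) +
          s * (P y x * if y = x then logb β a else logb β b) := fun x y => by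
    have hq : 0 < if y = x then a else b := by split_ifs <;> assumption
    have hsum : 0 < ∑ x', (if y = x' then a else b) ^ s :=
      sum_pos (fun x' _ => rpow_pos_of_pos (by split_ifs <;> assumption) s) ⟨y, mem_univ y⟩
    rw [logb_div (by positivity) hsum.ne', logb_mul hc.ne' (by positivity),
      logb_rpow_eq_mul_logb_of_pos hq, hZ, apply_ite (logb β)]
    ring
  simp only [hterm, sum_add_distrib, ← mul_sum, ← sum_mul, hPsum, sum_mul_ite_eq]
  simp only [sum_const, card_univ, nsmul_eq_mul]
  ring

end Hamming

theorem stmt0_general {𝒳 : Type*} [Fintype 𝒳] [DecidableEq 𝒳]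
    (M : ℕ) (hM : 2 ≤ M) (hcard : Fintype.card 𝒳 = M)
    (P : 𝒳 → 𝒳 → ℝ)
    (hPsum : ∀ x, ∑ y, P y x = 1)
    (δ : ℝ)
    (hδ : δ = (1 / (M : ℝ)) * ∑ x, ∑ y ∈ univ.filter (fun y => y ≠ x), P y x)
    (hδpos : 0 < δ) (hδlt : δ < ((M : ℝ) - 1) / (M : ℝ))
    (q : 𝒳 → 𝒳 → ℝ)  -- Hamming mismatched metric with parameter ε = δ
    (hq : ∀ y x, q y x = if y = x then 1 - δ else δ / ((M : ℝ) - 1))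
    (I : ℝ → ℝ)       -- generalized mutual information
    (hI : ∀ s : ℝ, I s = (1 / (M : ℝ)) * ∑ x, ∑ y, P y x *
      Real.logb 2 ((M : ℝ) * (q y x) ^ s / ∑ x', (q y x') ^ s)) :
    (∀ s : ℝ, 0 < s →
      I s ≤ Real.logb 2 (M : ℝ) - binEnt δ - δ * Real.logb 2 ((M : ℝ) - 1)) ∧
    I 1 = Real.logb 2 (M : ℝ) - binEnt δ - δ * Real.logb 2 ((M : ℝ) - 1) := by
  have hM1 : (0 : ℝ) < M - 1 := by
    have : (2 : ℝ) ≤ M := by exact_mod_cast hM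
    linarith
  have hδ1 : δ < 1 := hδlt.trans ((div_lt_one (by linarith)).2 (by linarith))
  have hoff : ∑ x, ∑ y ∈ univ.filter (· ≠ x), P y x = M * δ := by
    rw [hδ]; field_simp
  have hdiag : ∑ x, P x x = M * (1 - δ) := by
    have hrows := sum_diag_add_sum_offDiag P hPsum
    rw [hcard, hoff] at hrows
    linarith
  set L := (1 - δ) * logb 2 (1 - δ) + δ * logb 2 (δ / (M - 1))
  have hIs : ∀ s, I s =
      logb 2 M + s * L - logb 2 ((1 - δ) ^ s + (M - 1) * (δ / (M - 1)) ^ s) := by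
    intro s
    simp only [hI, hq]
    rw [sum_mul_logb_hamming_rpow 2 P hPsum (by linarith) (div_pos hδpos hM1) (by linarith) s,
      hcard, hdiag, hoff]
    field_simp
    ring
  have hZ1 : (1 - δ) ^ (1 : ℝ) + (M - 1) * (δ / (M - 1)) ^ (1 : ℝ) = 1 := by
    rw [rpow_one, rpow_one, mul_div_cancel₀ _ hM1.ne', sub_add_cancel]
  have hI1 : I 1 = logb 2 M + L := by rw [hIs, hZ1, logb_one]; ring
  have hL : L = -binEnt δ - δ * logb 2 (M - 1) := by
    simp only [L, logb_div hδpos.ne' hM1.ne', binEnt]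
    ring
  refine ⟨fun s _ => ?_, by rw [hI1, hL]; ring⟩
  rw [hIs]
  linarith [sub_one_mul_crossEntropy_le_logb one_lt_two hδpos hδ1 hM1 s]

/-- For a DMC with input/output alphabet `𝒳` of size `M ≥ 2`, uniform input,
symbol error probability `δ ∈ (0, (M-1)/M)`, and the symbol-wise Hamming mismatched
decoding metric with parameter `ε = δ`, the GMI satisfies
`sup_{s>0} I(s) = log₂ M − h_b(δ) − δ·log₂(M−1)`, attained at `s = 1`.
Here `P y x` denotes the transition probability P(x̂ = y | x). -/
theorem stmt0 {𝒳 : Type*} [Fintype 𝒳] [DecidableEq 𝒳]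
    (M : ℕ) (hM : 2 ≤ M) (hcard : Fintype.card 𝒳 = M)
    (P : 𝒳 → 𝒳 → ℝ)
    (hPnn : ∀ x y, 0 ≤ P y x)
    (hPsum : ∀ x, ∑ y, P y x = 1)
    (δ : ℝ)
    (hδ : δ = (1 / (M : ℝ)) * ∑ x, ∑ y ∈ univ.filter (fun y => y ≠ x), P y x)
    (hδpos : 0 < δ) (hδlt : δ < ((M : ℝ) - 1) / (M : ℝ))
    (q : 𝒳 → 𝒳 → ℝ)  -- Hamming mismatched metric with parameter ε = δ
    (hq : ∀ y x, q y x = if y = x then 1 - δ else δ / ((M : ℝ) - 1))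
    (I : ℝ → ℝ)       -- generalized mutual information
    (hI : ∀ s : ℝ, I s = (1 / (M : ℝ)) * ∑ x, ∑ y, P y x *
      Real.logb 2 ((M : ℝ) * (q y x) ^ s / ∑ x', (q y x') ^ s)) :
    (∀ s : ℝ, 0 < s →
      I s ≤ Real.logb 2 (M : ℝ) - binEnt δ - δ * Real.logb 2 ((M : ℝ) - 1)) ∧
    I 1 = Real.logb 2 (M : ℝ) - binEnt δ - δ * Real.logb 2 ((M : ℝ) - 1) :=
  stmt0_general M hM hcard P hPsum δ hδ hδpos hδlt q hq I hI
end

section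
/- Let 𝒳 be a finite alphabet with |𝒳| = M ≥ 2, let P(x̂|x) be the transition probabilities of a discrete memoryless channel with input and output alphabet 𝒳, assume uniform input, and let δ = (1/M)·Σ_{x∈𝒳} Σ_{x̂≠x} P(x̂|x), with 0 < δ < 1. For the symbol-wise Hamming mismatched decoding metric with parameter ε = δ, the generalized mutual information evaluated at s = 1 equals I(1) = log₂ M − h_b(δ) − δ·log₂(M−1). -/
open Finset

/-!
The Hamming metric is normalised (each row sums to `1`), so at `s = 1` the GMI is
`(1/M) ∑ P(x̂|x) log₂ (M q(x̂,x))`, where `M q` takes only the two values `M (1 - δ)` and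
`M δ / (M - 1)`. With `ε = δ` their weights are exactly the diagonal mass `M (1 - δ)` and the
off-diagonal mass `M δ`, and expanding the logarithms gives the entropy expression.
-/

namespace Real

theorem mul_logb_mul_self {b c a : ℝ} (hc : c ≠ 0) :
    a * logb b (c * a) = a * logb b c + a * logb b a := by
  rcases eq_or_ne a 0 with rfl | ha
  · simp
  · rw [logb_mul hc ha, mul_add]

end Real

section DiscreteChannel

variable {𝒳 : Type*} [Fintype 𝒳] [DecidableEq 𝒳]

noncomputable def hammingMetric (M : ℕ) (ε : ℝ) (y x : 𝒳) : ℝ :=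
  if y = x then 1 - ε else ε / ((M : ℝ) - 1)

theorem sum_hammingMetric {M : ℕ} (hcard : Fintype.card 𝒳 = M) (hM : (M : ℝ) - 1 ≠ 0)
    (ε : ℝ) (y : 𝒳) : ∑ x, hammingMetric M ε y x = 1 := by
  have hcard' : ((Fintype.card 𝒳 - 1 : ℕ) : ℝ) = (M : ℝ) - 1 := by
    have : 1 ≤ M := hcard ▸ Fintype.card_pos_iff.mpr ⟨y⟩
    rw [hcard, Nat.cast_sub this, Nat.cast_one]
  unfold hammingMetric
  rw [← add_sum_erase _ _ (mem_univ y),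
    sum_congr rfl fun x hx => if_neg (ne_of_mem_erase hx).symm, sum_const,
    card_erase_of_mem (mem_univ y), card_univ, nsmul_eq_mul, hcard', if_pos rfl,
    mul_div_cancel₀ _ hM, sub_add_cancel]

def offDiagMass (P : 𝒳 → 𝒳 → ℝ) : ℝ :=
  ∑ x, ∑ y ∈ univ.filter (fun y => y ≠ x), P y x

theorem sum_diag_add_offDiagMass {P : 𝒳 → 𝒳 → ℝ} (hPsum : ∀ x, ∑ y, P y x = 1) :
    ∑ x, P x x + offDiagMass P = Fintype.card 𝒳 := by
  rw [offDiagMass, ← sum_add_distrib,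
    sum_congr rfl fun x _ => (filter_ne' univ x).symm ▸ add_sum_erase univ (P · x) (mem_univ x)]
  simp [hPsum]

theorem sum_sum_mul_ite_eq (P : 𝒳 → 𝒳 → ℝ) (a b : ℝ) :
    ∑ x, ∑ y, P y x * (if y = x then a else b) = (∑ x, P x x) * a + offDiagMass P * b := by
  simp only [offDiagMass, sum_mul, ← sum_add_distrib, mul_ite, sum_ite, filter_eq',
    if_pos (mem_univ _), sum_singleton]

end DiscreteChannel

theorem mul_logb_hammingValues_eq_entropy {m : ℝ} (hm : m ≠ 0) (hm1 : m - 1 ≠ 0) (δ : ℝ) :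
    (1 - δ) * Real.logb 2 (m * (1 - δ)) + δ * Real.logb 2 (m * (δ / (m - 1))) =
      Real.logb 2 m - binEnt δ - δ * Real.logb 2 (m - 1) := by
  rw [Real.mul_logb_mul_self hm, mul_div_left_comm, mul_comm δ (m / (m - 1)),
    Real.mul_logb_mul_self (div_ne_zero hm hm1), Real.logb_div hm hm1, binEnt]
  ring

theorem stmt5_general {𝒳 : Type*} [Fintype 𝒳] [DecidableEq 𝒳]
    (M : ℕ) (hM : 2 ≤ M) (hcard : Fintype.card 𝒳 = M)
    (P : 𝒳 → 𝒳 → ℝ)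
    (hPsum : ∀ x, ∑ y, P y x = 1)
    (δ : ℝ)
    (hδ : δ = (1 / (M : ℝ)) * ∑ x, ∑ y ∈ univ.filter (fun y => y ≠ x), P y x)
    (q : 𝒳 → 𝒳 → ℝ)  -- Hamming mismatched metric with parameter ε = δ
    (hq : ∀ y x, q y x = if y = x then 1 - δ else δ / ((M : ℝ) - 1))
    (I : ℝ → ℝ)
    (hI : ∀ s : ℝ, I s = (1 / (M : ℝ)) * ∑ x, ∑ y, P y x *
      Real.logb 2 ((M : ℝ) * (q y x) ^ s / ∑ x', (q y x') ^ s)) :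
    I 1 = Real.logb 2 (M : ℝ) - binEnt δ - δ * Real.logb 2 ((M : ℝ) - 1) := by
  have hMr : (2 : ℝ) ≤ M := by exact_mod_cast hM
  have hM0 : (M : ℝ) ≠ 0 := by positivity
  have hM1 : (M : ℝ) - 1 ≠ 0 := by linarith
  obtain rfl : q = hammingMetric M δ := funext₂ hq
  have hoff : offDiagMass P = M * δ := by
    rw [hδ, offDiagMass, one_div, mul_inv_cancel_left₀ hM0]
  have hdiag : ∑ x, P x x = M * (1 - δ) := by
    have hmass := sum_diag_add_offDiagMass hPsum
    rw [hcard, hoff] at hmass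
    linarith
  have hlog (y x : 𝒳) : Real.logb 2 (M * hammingMetric M δ y x ^ (1 : ℝ) /
      ∑ x', hammingMetric M δ y x' ^ (1 : ℝ)) =
      if y = x then Real.logb 2 (M * (1 - δ)) else Real.logb 2 (M * (δ / (M - 1))) := by
    simp only [Real.rpow_one]
    rw [sum_hammingMetric hcard hM1, div_one, hammingMetric]
    split_ifs <;> rfl
  simp only [hI, hlog, sum_sum_mul_ite_eq, hdiag, hoff]
  rw [← mul_logb_hammingValues_eq_entropy hM0 hM1]
  field_simp

/-- For a DMC on an alphabet of size `M ≥ 2` with uniform input and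
symbol error probability `δ ∈ (0,1)`, the GMI of the symbol-wise Hamming mismatched
metric with parameter `ε = δ`, evaluated at `s = 1`, equals
`log₂ M − h_b(δ) − δ·log₂(M−1)`. Here `P y x` denotes P(x̂ = y | x). -/
theorem stmt5 {𝒳 : Type*} [Fintype 𝒳] [DecidableEq 𝒳]
    (M : ℕ) (hM : 2 ≤ M) (hcard : Fintype.card 𝒳 = M)
    (P : 𝒳 → 𝒳 → ℝ)
    (hPnn : ∀ x y, 0 ≤ P y x)
    (hPsum : ∀ x, ∑ y, P y x = 1)
    (δ : ℝ)
    (hδ : δ = (1 / (M : ℝ)) * ∑ x, ∑ y ∈ univ.filter (fun y => y ≠ x), P y x)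
    (hδpos : 0 < δ) (hδlt : δ < 1)
    (q : 𝒳 → 𝒳 → ℝ)  -- Hamming mismatched metric with parameter ε = δ
    (hq : ∀ y x, q y x = if y = x then 1 - δ else δ / ((M : ℝ) - 1))
    (I : ℝ → ℝ)
    (hI : ∀ s : ℝ, I s = (1 / (M : ℝ)) * ∑ x, ∑ y, P y x *
      Real.logb 2 ((M : ℝ) * (q y x) ^ s / ∑ x', (q y x') ^ s)) :
    I 1 = Real.logb 2 (M : ℝ) - binEnt δ - δ * Real.logb 2 ((M : ℝ) - 1) :=
  stmt5_general M hM hcard P hPsum δ hδ q hq I hI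
end

section
/- Let M be an integer with M ≥ 2, let δ ∈ (0, (M−1)/M), and set Λ = (δ/(M−1)) / (1−δ). Then for every s > 0, (1−δ)·log₂( 1 + (M−1)·Λ^s ) + δ·log₂( 1 + (M−1)^{−1}·Λ^{−s} ) ≥ h_b(δ), with equality when s = 1. Equivalently, the function s ↦ log₂ M − (1−δ)·log₂(1+(M−1)Λ^s) − δ·log₂(1+(M−1)^{−1}Λ^{−s}) − δ·log₂(M−1) attains its supremum over s > 0 at s = 1, where it equals log₂ M − h_b(δ) − δ·log₂(M−1). -/
/-!
With `t = (M - 1) Λ^s` the left-hand side equals `log₂ (1 + t) - δ log₂ t`. Writing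
`1 + t = (1 - δ) · (1 - δ)⁻¹ + δ · (t / δ)`, concavity of the logarithm bounds this from below by
`h_b(δ)`, and the two points of the convex combination coincide exactly when `t = δ / (1 - δ)`,
which is the value of `(M - 1) Λ` at `s = 1`.
-/

open Real

lemma logb_one_add_inv {b t : ℝ} (ht : 0 < t) :
    logb b (1 + t⁻¹) = logb b (1 + t) - logb b t := by
  rw [← logb_div (by positivity) ht.ne']
  congr 1
  field_simp
  ring

lemma binEnt_le_logb_one_add_sub_mul_logb {δ t : ℝ} (hδ0 : 0 < δ) (hδ1 : δ < 1) (ht : 0 < t) :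
    binEnt δ ≤ logb 2 (1 + t) - δ * logb 2 t := by
  have h1δ : 0 < 1 - δ := by linarith
  have jensen := strictConcaveOn_log_Ioi.concaveOn.2
    (Set.mem_Ioi.2 (inv_pos.2 h1δ)) (Set.mem_Ioi.2 (div_pos ht hδ0)) h1δ.le hδ0.le (by ring)
  have hcomb : (1 - δ) • (1 - δ)⁻¹ + δ • (t / δ) = 1 + t := by
    simp only [smul_eq_mul]
    field_simp
  rw [hcomb, smul_eq_mul, smul_eq_mul, log_inv, log_div ht.ne' hδ0.ne'] at jensen
  have hlog2 : 0 < log 2 := log_pos one_lt_two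
  simp only [binEnt, logb]
  rw [← sub_nonneg]
  have hdiff : log (1 + t) / log 2 - δ * (log t / log 2)
      - (-δ * (log δ / log 2) - (1 - δ) * (log (1 - δ) / log 2))
      = (log (1 + t) - ((1 - δ) * -log (1 - δ) + δ * (log t - log δ))) / log 2 := by
    field_simp
    ring
  rw [hdiff]
  exact div_nonneg (by linarith) hlog2.le

lemma logb_one_add_odds_sub_mul_logb_odds {δ : ℝ} (hδ0 : 0 < δ) (hδ1 : δ < 1) :
    logb 2 (1 + δ / (1 - δ)) - δ * logb 2 (δ / (1 - δ)) = binEnt δ := by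
  have h1δ : 0 < 1 - δ := by linarith
  have hodds : 1 + δ / (1 - δ) = (1 - δ)⁻¹ := by
    field_simp
    ring
  rw [hodds, logb_inv, logb_div hδ0.ne' h1δ.ne', binEnt]
  ring

/-- For an integer `M ≥ 2`, `δ ∈ (0,(M−1)/M)` and
`Λ = (δ/(M−1))/(1−δ)`, for every `s > 0`
`(1−δ)·log₂(1+(M−1)Λ^s) + δ·log₂(1+(M−1)⁻¹Λ^{−s}) ≥ h_b(δ)`, with equality at `s = 1`.
Equivalently, `s ↦ log₂ M − (1−δ)·log₂(1+(M−1)Λ^s) − δ·log₂(1+(M−1)⁻¹Λ^{−s}) − δ·log₂(M−1)`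
attains its supremum over `s > 0` at `s = 1`, where it equals
`log₂ M − h_b(δ) − δ·log₂(M−1)`. -/
theorem stmt6 (M : ℕ) (hM : 2 ≤ M)
    (δ : ℝ) (hδ : δ ∈ Set.Ioo (0 : ℝ) (((M : ℝ) - 1) / (M : ℝ)))
    (Λ : ℝ) (hΛ : Λ = (δ / ((M : ℝ) - 1)) / (1 - δ)) :
    (∀ s : ℝ, 0 < s →
      (1 - δ) * Real.logb 2 (1 + ((M : ℝ) - 1) * Λ ^ s)
        + δ * Real.logb 2 (1 + ((M : ℝ) - 1)⁻¹ * Λ ^ (-s)) ≥ binEnt δ) ∧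
    (1 - δ) * Real.logb 2 (1 + ((M : ℝ) - 1) * Λ ^ (1 : ℝ))
        + δ * Real.logb 2 (1 + ((M : ℝ) - 1)⁻¹ * Λ ^ (-(1 : ℝ))) = binEnt δ ∧
    IsGreatest
      ((fun s : ℝ => Real.logb 2 (M : ℝ)
          - (1 - δ) * Real.logb 2 (1 + ((M : ℝ) - 1) * Λ ^ s)
          - δ * Real.logb 2 (1 + ((M : ℝ) - 1)⁻¹ * Λ ^ (-s))
          - δ * Real.logb 2 ((M : ℝ) - 1)) '' (Set.Ioi 0))
      (Real.logb 2 (M : ℝ) - binEnt δ - δ * Real.logb 2 ((M : ℝ) - 1)) := by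
  obtain ⟨hδ0, hδM⟩ := hδ
  have hM1 : (0 : ℝ) < M - 1 := by
    have : (2 : ℝ) ≤ M := by exact_mod_cast hM
    linarith
  have hδ1 : δ < 1 := hδM.trans (div_lt_one (by linarith) |>.2 (by linarith))
  have hΛ0 : 0 < Λ := hΛ ▸ div_pos (div_pos hδ0 hM1) (by linarith)
  have hreduce : ∀ s : ℝ,
      (1 - δ) * logb 2 (1 + ((M : ℝ) - 1) * Λ ^ s)
        + δ * logb 2 (1 + ((M : ℝ) - 1)⁻¹ * Λ ^ (-s))
      = logb 2 (1 + (M - 1) * Λ ^ s) - δ * logb 2 ((M - 1) * Λ ^ s) := fun s => by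
    have ht : 0 < ((M : ℝ) - 1) * Λ ^ s := mul_pos hM1 (rpow_pos_of_pos hΛ0 s)
    rw [rpow_neg hΛ0.le, ← mul_inv, logb_one_add_inv ht]
    ring
  have hlower : ∀ s : ℝ, binEnt δ ≤ (1 - δ) * logb 2 (1 + ((M : ℝ) - 1) * Λ ^ s)
      + δ * logb 2 (1 + ((M : ℝ) - 1)⁻¹ * Λ ^ (-s)) := fun s => by
    rw [hreduce]
    exact binEnt_le_logb_one_add_sub_mul_logb hδ0 hδ1 (mul_pos hM1 (rpow_pos_of_pos hΛ0 s))
  have hattained : (1 - δ) * logb 2 (1 + ((M : ℝ) - 1) * Λ ^ (1 : ℝ))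
      + δ * logb 2 (1 + ((M : ℝ) - 1)⁻¹ * Λ ^ (-(1 : ℝ))) = binEnt δ := by
    have hodds : ((M : ℝ) - 1) * Λ ^ (1 : ℝ) = δ / (1 - δ) := by
      rw [rpow_one, hΛ]
      field_simp
    rw [hreduce, hodds, logb_one_add_odds_sub_mul_logb_odds hδ0 hδ1]
  refine ⟨fun s _ => hlower s, hattained, ⟨1, Set.mem_Ioi.2 one_pos, by simp only; linarith⟩, ?_⟩
  rintro y ⟨s, -, rfl⟩
  linarith [hlower s]
end

section
/- Let M be an integer with M ≥ 2, let δ ∈ (0, (M−1)/M), and set Λ = (δ/(M−1)) / (1−δ). Then the real function ψ(s) = (1−δ)·log₂( 1 + (M−1)·Λ^s ) + δ·log₂( 1 + (M−1)^{−1}·Λ^{−s} ) is differentiable at s = 1 with derivative ψ'(1) = 0. -/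
/-!
Writing `x = c Λ^s`, the second logarithm is `log(1 + x⁻¹)`, so
`d/ds [(1-δ) log(1 + c Λ^s) + δ log(1 + c⁻¹ Λ^(-s))] = log Λ · ((1-δ) x - δ) / (1 + x)`.
With `c = M - 1` and `s = 1` the choice of `Λ` makes `x = δ / (1 - δ)`, the zero of this derivative.
-/

open Real

lemma hasDerivAt_log_one_add_mul_rpow {c Λ : ℝ} (hc : 0 ≤ c) (hΛ : 0 < Λ) (t : ℝ) :
    HasDerivAt (fun s => log (1 + c * Λ ^ s)) (c * (Λ ^ t * log Λ) / (1 + c * Λ ^ t)) t :=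
  (((hasStrictDerivAt_const_rpow hΛ t).hasDerivAt.const_mul c).const_add 1).log
    (by positivity)

lemma hasDerivAt_weighted_log_one_add_mul_rpow {c Λ : ℝ} (hc : 0 < c) (hΛ : 0 < Λ) (δ t : ℝ) :
    HasDerivAt (fun s => (1 - δ) * log (1 + c * Λ ^ s) + δ * log (1 + c⁻¹ * Λ ^ (-s)))
      (log Λ * ((1 - δ) * (c * Λ ^ t) - δ) / (1 + c * Λ ^ t)) t := by
  have hneg : HasDerivAt (fun s => log (1 + c⁻¹ * Λ ^ (-s)))
      (c⁻¹ * (Λ ^ (-t) * log Λ) / (1 + c⁻¹ * Λ ^ (-t)) * (-1)) t :=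
    (hasDerivAt_log_one_add_mul_rpow (inv_nonneg.2 hc.le) hΛ (-t)).comp t (hasDerivAt_neg t)
  refine (((hasDerivAt_log_one_add_mul_rpow hc.le hΛ t).const_mul (1 - δ)).add
    (hneg.const_mul δ)).congr_deriv ?_
  rw [rpow_neg hΛ.le]
  field_simp
  ring

/-- For an integer `M ≥ 2`, `δ ∈ (0,(M−1)/M)` and
`Λ = (δ/(M−1))/(1−δ)`, the function
`ψ(s) = (1−δ)·log₂(1+(M−1)Λ^s) + δ·log₂(1+(M−1)⁻¹Λ^{−s})`
is differentiable at `s = 1` with derivative `ψ'(1) = 0`. -/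
theorem stmt7 (M : ℕ) (hM : 2 ≤ M)
    (δ : ℝ) (hδ : δ ∈ Set.Ioo (0 : ℝ) (((M : ℝ) - 1) / (M : ℝ)))
    (Λ : ℝ) (hΛ : Λ = (δ / ((M : ℝ) - 1)) / (1 - δ)) :
    HasDerivAt (fun s : ℝ =>
      (1 - δ) * Real.logb 2 (1 + ((M : ℝ) - 1) * Λ ^ s)
        + δ * Real.logb 2 (1 + ((M : ℝ) - 1)⁻¹ * Λ ^ (-s))) 0 1 := by
  obtain ⟨hδ0, hδM⟩ := hδ
  have hM1 : (0 : ℝ) < M - 1 := by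
    have : (2 : ℝ) ≤ M := by exact_mod_cast hM
    linarith
  have hδ1 : δ < 1 := hδM.trans_le (div_le_one_of_le₀ (by linarith) (by linarith))
  have hΛ0 : 0 < Λ := by rw [hΛ]; exact div_pos (div_pos hδ0 hM1) (by linarith)
  have hcritical : (1 - δ) * ((M - 1) * Λ ^ (1 : ℝ)) - δ = 0 := by
    have : 1 - δ ≠ 0 := by linarith
    rw [rpow_one, hΛ]
    field_simp
    ring
  have hψ := (hasDerivAt_weighted_log_one_add_mul_rpow hM1 hΛ0 δ 1).div_const (log 2)
  rw [hcritical, mul_zero, zero_div, zero_div] at hψ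
  refine hψ.congr_of_eventuallyEq (Filter.Eventually.of_forall fun s => ?_)
  simp only [logb]
  ring
end

section
/- Let m ≥ 1 and let ε₁, …, ε_m ∈ (0,1) be the crossover probabilities of m parallel independent binary symmetric channels, with average ε̄ = (1/m)·Σ_{i=1}^m ε_i satisfying 0 < ε̄ < 1/2. Let q̄ be the bit-wise Hamming mismatched metric with parameter ε̄: q̄(b̂,b) = 1−ε̄ if b̂ = b and q̄(b̂,b) = ε̄ otherwise. Define, for s > 0, the bit-wise generalized mutual information I_bw(s) = Σ_{i=1}^m Σ_{b∈{0,1}} Σ_{b̂∈{0,1}} (1/2)·w_i(b̂|b)·log₂( 2·q̄(b̂,b)^s / (q̄(b̂,0)^s + q̄(b̂,1)^s) ), where w_i(b̂|b) = 1−ε_i if b̂ = b and ε_i otherwise. Then sup_{s>0} I_bw(s) = m·(1 − h_b(ε̄)), and the supremum is attained at s = 1. -/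
open Finset

open Real

/-! With the mismatched Hamming metric of parameter `p`, the GMI of a binary symmetric channel is
affine in the channel's crossover probability, so the sum over the `m` channels only sees their
average `p`: `I_bw(s) = m · (1 - s·h_b(p) - log₂((1-p)^s + p^s))`. The theorem then reduces to
`(1 - s)·h_b(p) ≤ log₂((1-p)^s + p^s)`, which is weighted AM-GM for `p^(s-1)` and `(1-p)^(s-1)`
with weights `p` and `1 - p`, with equality at `s = 1`. -/

lemma one_sub_mul_binEnt_le_logb_rpow_add_rpow {p : ℝ} (hp0 : 0 < p) (hp1 : p < 1) (s : ℝ) :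
    (1 - s) * binEnt p ≤ logb 2 ((1 - p) ^ s + p ^ s) := by
  have hq0 : 0 < 1 - p := by linarith
  have amgm := geom_mean_le_arith_mean2_weighted hp0.le hq0.le
    (rpow_pos_of_pos hp0 (s - 1)).le (rpow_pos_of_pos hq0 (s - 1)).le (by ring)
  have hmul : ∀ {x : ℝ}, 0 < x → x * x ^ (s - 1) = x ^ s := fun hx => by
    rw [mul_comm, ← rpow_add_one hx.ne']
    ring_nf
  rw [hmul hp0, hmul hq0, add_comm (p ^ s)] at amgm
  calc (1 - s) * binEnt p
      = logb 2 ((p ^ (s - 1)) ^ p * ((1 - p) ^ (s - 1)) ^ (1 - p)) := by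
        rw [logb_mul (by positivity) (by positivity), logb_rpow_eq_mul_logb_of_pos (by positivity),
          logb_rpow_eq_mul_logb_of_pos hp0, logb_rpow_eq_mul_logb_of_pos (by positivity),
          logb_rpow_eq_mul_logb_of_pos hq0, binEnt]
        ring
    _ ≤ logb 2 ((1 - p) ^ s + p ^ s) := logb_le_logb_of_le one_lt_two (by positivity) amgm

lemma bsc_hamming_gmi_eq (ε : ℝ) {p : ℝ} (hp0 : 0 < p) (hp1 : p < 1) (s : ℝ) :
    ∑ b : Bool, ∑ bh : Bool, (1 / 2 : ℝ) * (if bh = b then 1 - ε else ε) *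
        logb 2 (2 * (if bh = b then 1 - p else p) ^ s /
          ((if bh = false then 1 - p else p) ^ s + (if bh = true then 1 - p else p) ^ s)) =
      1 + s * logb 2 (1 - p) - logb 2 ((1 - p) ^ s + p ^ s) +
        s * (logb 2 p - logb 2 (1 - p)) * ε := by
  have hq0 : 0 < 1 - p := by linarith
  have hD : (1 - p) ^ s + p ^ s ≠ 0 := by positivity
  have hlog : ∀ {x : ℝ}, 0 < x →
      logb 2 (2 * x ^ s / ((1 - p) ^ s + p ^ s)) =
        1 + s * logb 2 x - logb 2 ((1 - p) ^ s + p ^ s) := fun hx => by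
    rw [logb_div (by positivity) hD, logb_mul two_ne_zero (by positivity),
      logb_self_eq_one one_lt_two, logb_rpow_eq_mul_logb_of_pos hx]
  simp only [Fintype.sum_bool, if_true, if_false, Bool.true_eq_false, Bool.false_eq_true,
    add_comm (p ^ s), hlog hp0, hlog hq0]
  ring

theorem stmt13_general (m : ℕ) (hm : 1 ≤ m)
    (ε : Fin m → ℝ)
    (εbar : ℝ) (hεbar : εbar = (1 / (m : ℝ)) * ∑ i, ε i)
    (hεbar0 : 0 < εbar) (hεbar2 : εbar < 1 / 2)
    (w : Fin m → Bool → Bool → ℝ)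
    (hw : ∀ i bh b, w i bh b = if bh = b then 1 - ε i else ε i)
    (qbar : Bool → Bool → ℝ)
    (hqbar : ∀ bh b, qbar bh b = if bh = b then 1 - εbar else εbar)
    (Ibw : ℝ → ℝ)
    (hIbw : ∀ s : ℝ, Ibw s = ∑ i, ∑ b : Bool, ∑ bh : Bool,
      (1 / 2 : ℝ) * w i bh b *
        Real.logb 2 (2 * (qbar bh b) ^ s /
          ((qbar bh false) ^ s + (qbar bh true) ^ s))) :
    (∀ s : ℝ, 0 < s → Ibw s ≤ (m : ℝ) * (1 - binEnt εbar)) ∧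
    Ibw 1 = (m : ℝ) * (1 - binEnt εbar) := by
  have hεbar1 : εbar < 1 := by linarith
  have hsum : ∑ i, ε i = m * εbar := by
    rw [hεbar]
    field_simp [Nat.cast_ne_zero.mpr (Nat.one_le_iff_ne_zero.mp hm)]
  have hIbw_eq : ∀ s, Ibw s = m * (1 - s * binEnt εbar - logb 2 ((1 - εbar) ^ s + εbar ^ s)) := by
    intro s
    simp only [hIbw, hw, hqbar, bsc_hamming_gmi_eq _ hεbar0 hεbar1, sum_add_distrib, sum_const,
      ← mul_sum, hsum, card_univ, Fintype.card_fin, nsmul_eq_mul, binEnt]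
    ring
  refine ⟨fun s _ => ?_, ?_⟩
  · rw [hIbw_eq]
    have := one_sub_mul_binEnt_le_logb_rpow_add_rpow hεbar0 hεbar1 s
    exact mul_le_mul_of_nonneg_left (by linarith) m.cast_nonneg
  · simp [hIbw_eq]

/-- For `m` parallel independent BSCs with crossover probabilities
`εᵢ ∈ (0,1)` and average `ε̄ ∈ (0,1/2)`, let `q̄` be the bit-wise Hamming mismatched
metric with parameter `ε̄`. The bit-wise GMI
`I_bw(s) = Σᵢ Σ_{b,bh} (1/2)·wᵢ(bh|b)·log₂(2·q̄(bh,b)^s / (q̄(bh,0)^s + q̄(bh,1)^s))`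
satisfies `sup_{s>0} I_bw(s) = m·(1 − h_b(ε̄))`, attained at `s = 1`.
Bit `0` is `false`, bit `1` is `true`; `w i bh b` denotes wᵢ(bh|b). -/
theorem stmt13 (m : ℕ) (hm : 1 ≤ m)
    (ε : Fin m → ℝ) (hε : ∀ i, ε i ∈ Set.Ioo (0 : ℝ) 1)
    (εbar : ℝ) (hεbar : εbar = (1 / (m : ℝ)) * ∑ i, ε i)
    (hεbar0 : 0 < εbar) (hεbar2 : εbar < 1 / 2)
    (w : Fin m → Bool → Bool → ℝ)
    (hw : ∀ i bh b, w i bh b = if bh = b then 1 - ε i else ε i)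
    (qbar : Bool → Bool → ℝ)
    (hqbar : ∀ bh b, qbar bh b = if bh = b then 1 - εbar else εbar)
    (Ibw : ℝ → ℝ)
    (hIbw : ∀ s : ℝ, Ibw s = ∑ i, ∑ b : Bool, ∑ bh : Bool,
      (1 / 2 : ℝ) * w i bh b *
        Real.logb 2 (2 * (qbar bh b) ^ s /
          ((qbar bh false) ^ s + (qbar bh true) ^ s))) :
    (∀ s : ℝ, 0 < s → Ibw s ≤ (m : ℝ) * (1 - binEnt εbar)) ∧
    Ibw 1 = (m : ℝ) * (1 - binEnt εbar) :=
  stmt13_general m hm ε εbar hεbar hεbar0 hεbar2 w hw qbar hqbar Ibw hIbw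
end
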